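/- arXiv:2303.04555 — 8 statements merged into one kernel-verified Lean document; each statement's English description precedes it below -/
import Mathlib

section
/- Let d ≥ 1, let u, v ∈ ℝ^d, let δ ∈ (0,1), and let a be a standard Gaussian random variable (a ~ N(0,1)). Then Pr[‖a·u + v‖₂ ≥ δ·‖u‖₂] ≥ 1 − δ. -/
/-! By Cauchy–Schwarz against `u`, `‖a • u + v‖ ≥ |a + c| * ‖u‖` with `c = ⟪u, v⟫ / ‖u‖²`, so the
event fails only when `a` lies in the interval `(-c - δ, -c + δ)`. The standard Gaussian density is
at most `1 / √(2π) ≤ 1 / 2`, so that interval of length `2δ` has probability at most `δ`. -/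

open MeasureTheory ProbabilityTheory Real
open scoped NNReal ENNReal RealInnerProductSpace

lemma abs_add_inner_div_mul_norm_le_norm_smul_add {E : Type*} [NormedAddCommGroup E]
    [InnerProductSpace ℝ E] (a : ℝ) (u v : E) :
    |a + ⟪u, v⟫ / ‖u‖ ^ 2| * ‖u‖ ≤ ‖a • u + v‖ := by
  rcases eq_or_ne u 0 with rfl | hu
  · simp
  have hu' : 0 < ‖u‖ := norm_pos_iff.mpr hu
  have hinner : ⟪u, a • u + v⟫ = (a + ⟪u, v⟫ / ‖u‖ ^ 2) * ‖u‖ ^ 2 := by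
    rw [inner_add_right, real_inner_smul_right, real_inner_self_eq_norm_sq]
    field_simp
  have hcs : |a + ⟪u, v⟫ / ‖u‖ ^ 2| * ‖u‖ * ‖u‖ ≤ ‖a • u + v‖ * ‖u‖ := by
    have := abs_real_inner_le_norm u (a • u + v)
    rw [hinner, abs_mul, abs_of_nonneg (sq_nonneg ‖u‖)] at this
    linarith
  exact le_of_mul_le_mul_right hcs hu'

lemma gaussianPDFReal_le (μ : ℝ) (v : ℝ≥0) (x : ℝ) :
    gaussianPDFReal μ v x ≤ (√(2 * π * v))⁻¹ := by
  rw [gaussianPDFReal]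
  refine mul_le_of_le_one_right (by positivity) (exp_le_one_iff.mpr ?_)
  exact div_nonpos_of_nonpos_of_nonneg (neg_nonpos.mpr (sq_nonneg _)) (by positivity)

lemma gaussianReal_le_mul_volume (μ : ℝ) {v : ℝ≥0} (hv : v ≠ 0) (s : Set ℝ) :
    gaussianReal μ v s ≤ ENNReal.ofReal (√(2 * π * v))⁻¹ * volume s := by
  rw [gaussianReal_apply μ hv, ← setLIntegral_const]
  exact lintegral_mono fun x ↦ ENNReal.ofReal_le_ofReal (gaussianPDFReal_le μ v x)

lemma gaussianReal_ball_le (μ c r : ℝ) :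
    gaussianReal μ 1 (Metric.ball c r) ≤ ENNReal.ofReal r := by
  rcases le_or_gt r 0 with hr | hr
  · simp [Metric.ball_eq_empty.mpr hr]
  have h2 : 2 ≤ √(2 * π) := le_sqrt_of_sq_le (by nlinarith [pi_gt_three])
  calc gaussianReal μ 1 (Metric.ball c r)
      ≤ ENNReal.ofReal (√(2 * π))⁻¹ * ENNReal.ofReal (2 * r) := by
        simpa [Real.volume_ball] using gaussianReal_le_mul_volume μ one_ne_zero (Metric.ball c r)
    _ = ENNReal.ofReal (2 * r / √(2 * π)) := by
        rw [← ENNReal.ofReal_mul (by positivity), inv_mul_eq_div]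
    _ ≤ ENNReal.ofReal r :=
        ENNReal.ofReal_le_ofReal ((div_le_iff₀ (by positivity)).mpr (by nlinarith))

theorem stmt_3_general {d : ℕ} (u v : EuclideanSpace ℝ (Fin d))
    (δ : ℝ) (hδ : δ ∈ Set.Ioo (0 : ℝ) 1) :
    ENNReal.ofReal (1 - δ) ≤
      ProbabilityTheory.gaussianReal 0 1 {a : ℝ | δ * ‖u‖ ≤ ‖a • u + v‖} := by
  set c := ⟪u, v⟫ / ‖u‖ ^ 2
  have hsub : (Metric.ball (-c) δ)ᶜ ⊆ {a : ℝ | δ * ‖u‖ ≤ ‖a • u + v‖} := by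
    intro a ha
    have hδa : δ ≤ |a + c| := by simpa [Real.dist_eq] using ha
    exact (mul_le_mul_of_nonneg_right hδa (norm_nonneg u)).trans
      (abs_add_inner_div_mul_norm_le_norm_smul_add a u v)
  calc ENNReal.ofReal (1 - δ) = 1 - ENNReal.ofReal δ := by
        rw [ENNReal.ofReal_sub 1 hδ.1.le, ENNReal.ofReal_one]
    _ ≤ 1 - gaussianReal 0 1 (Metric.ball (-c) δ) :=
        tsub_le_tsub_left (gaussianReal_ball_le 0 _ _) 1
    _ = gaussianReal 0 1 (Metric.ball (-c) δ)ᶜ := (prob_compl_eq_one_sub measurableSet_ball).symm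
    _ ≤ _ := measure_mono hsub

theorem stmt_3 {d : ℕ} (hd : 1 ≤ d) (u v : EuclideanSpace ℝ (Fin d))
    (δ : ℝ) (hδ : δ ∈ Set.Ioo (0 : ℝ) 1) :
    ENNReal.ofReal (1 - δ) ≤
      ProbabilityTheory.gaussianReal 0 1 {a : ℝ | δ * ‖u‖ ≤ ‖a • u + v‖} :=
  stmt_3_general u v δ hδ
end

section
/- Under Oja's update rule, if additionally η ≤ 0.1 / max_{i∈[n]} ‖y_i‖₂², then for every i ∈ {1,…,n}, log(‖v_i‖₂² / ‖v_{i−1}‖₂²) ≥ η · ⟨y_i, v̂_{i−1}⟩². -/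
/-!
Writing `s = η ⟪y, ŵ⟫²` for the unit vector `ŵ = w / ‖w‖`, one Oja step multiplies the squared
norm by `1 + (2 + η ‖y‖²) s ≥ 1 + 2s`. By Cauchy–Schwarz `s ≤ η ‖y‖² ≤ 1/2`, and on `[0, 1/2]`
the bound `log (1 + 2s) ≥ 1 - 1/(1 + 2s) = 2s/(1 + 2s) ≥ s` holds.
-/

open RealInnerProductSpace

namespace Real

theorem le_log_one_add_two_mul {s : ℝ} (hs₀ : 0 ≤ s) (hs : s ≤ 1 / 2) :
    s ≤ log (1 + 2 * s) := by
  have hpos : 0 < 1 + 2 * s := by linarith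
  calc s ≤ 1 - (1 + 2 * s)⁻¹ := by
        rw [le_sub_comm, inv_le_iff_one_le_mul₀ hpos]
        nlinarith
    _ ≤ log (1 + 2 * s) := one_sub_inv_le_log_of_pos hpos

end Real

section OjaStep

variable {E : Type*} [NormedAddCommGroup E] [InnerProductSpace ℝ E]

theorem norm_add_smul_inner_smul_sq (w y : E) (η : ℝ) :
    ‖w + (η * ⟪y, w⟫) • y‖ ^ 2 = ‖w‖ ^ 2 + (2 * η + η ^ 2 * ‖y‖ ^ 2) * ⟪y, w⟫ ^ 2 := by
  rw [norm_add_sq_real, real_inner_smul_right, norm_smul, real_inner_comm w y, mul_pow,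
    Real.norm_eq_abs, sq_abs]
  ring

theorem inner_normalize_sq (y w : E) : ⟪y, ‖w‖⁻¹ • w⟫ ^ 2 = ⟪y, w⟫ ^ 2 / ‖w‖ ^ 2 := by
  rw [real_inner_smul_right, mul_pow, inv_pow, inv_mul_eq_div]

theorem inner_normalize_sq_le (y w : E) : ⟪y, ‖w‖⁻¹ • w⟫ ^ 2 ≤ ‖y‖ ^ 2 := by
  rw [inner_normalize_sq]
  refine div_le_of_le_mul₀ (by positivity) (by positivity) ?_
  rw [← mul_pow, ← sq_abs]
  exact pow_le_pow_left₀ (abs_nonneg _) (abs_real_inner_le_norm y w) 2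

theorem le_log_norm_oja_step_sq_div {w y : E} {η : ℝ} (hη₀ : 0 ≤ η)
    (hη : η * ‖y‖ ^ 2 ≤ 1 / 2) :
    η * ⟪y, ‖w‖⁻¹ • w⟫ ^ 2 ≤ Real.log (‖w + (η * ⟪y, w⟫) • y‖ ^ 2 / ‖w‖ ^ 2) := by
  rcases eq_or_ne w 0 with rfl | hw
  · simp -- both sides are `0`, since `Real.log 0 = 0`
  set s := η * ⟪y, ‖w‖⁻¹ • w⟫ ^ 2
  have hs₀ : 0 ≤ s := by positivity
  have hs : s ≤ 1 / 2 := (mul_le_mul_of_nonneg_left (inner_normalize_sq_le y w) hη₀).trans hη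
  have hgrowth : 1 + 2 * s ≤ ‖w + (η * ⟪y, w⟫) • y‖ ^ 2 / ‖w‖ ^ 2 := by
    have hw2 : 0 < ‖w‖ ^ 2 := by positivity
    rw [norm_add_smul_inner_smul_sq, add_div, div_self hw2.ne', mul_div_assoc,
      ← inner_normalize_sq]
    have : 0 ≤ η ^ 2 * ‖y‖ ^ 2 * ⟪y, ‖w‖⁻¹ • w⟫ ^ 2 := by positivity
    linarith
  calc s ≤ Real.log (1 + 2 * s) := Real.le_log_one_add_two_mul hs₀ hs
    _ ≤ _ := Real.log_le_log (by linarith) hgrowth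

end OjaStep

theorem stmt_6_general {n d : ℕ} (hn : 1 ≤ n)
    (y : ℕ → EuclideanSpace ℝ (Fin d)) (η : ℝ) (hη : 0 < η)
    (hη' : η ≤ 0.1 / ((Finset.Icc 1 n).sup' (Finset.nonempty_Icc.mpr hn)
      fun i => ‖y i‖ ^ 2))
    (v : ℕ → EuclideanSpace ℝ (Fin d))
    (hv : ∀ i, 1 ≤ i → i ≤ n → v i = v (i - 1) + (η * ⟪y i, v (i - 1)⟫) • y i)
    (i : ℕ) (hi : 1 ≤ i) (hin : i ≤ n) :
    η * ⟪y i, ‖v (i - 1)‖⁻¹ • v (i - 1)⟫ ^ 2 ≤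
      Real.log (‖v i‖ ^ 2 / ‖v (i - 1)‖ ^ 2) := by
  have hy : ‖y i‖ ^ 2 ≤ (Finset.Icc 1 n).sup' (Finset.nonempty_Icc.mpr hn) fun i => ‖y i‖ ^ 2 :=
    Finset.le_sup' (fun i => ‖y i‖ ^ 2) (Finset.mem_Icc.mpr ⟨hi, hin⟩)
  have hηy : η * ‖y i‖ ^ 2 ≤ 1 / 2 := by
    have := mul_le_of_le_div₀ (by norm_num) ((sq_nonneg _).trans hy) hη'
    nlinarith
  rw [hv i hi hin]
  exact le_log_norm_oja_step_sq_div hη.le hηy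

theorem stmt_6 {n d : ℕ} (hn : 1 ≤ n) (hd : 1 ≤ d)
    (y : ℕ → EuclideanSpace ℝ (Fin d)) (η : ℝ) (hη : 0 < η)
    (hη' : η ≤ 0.1 / ((Finset.Icc 1 n).sup' (Finset.nonempty_Icc.mpr hn)
      fun i => ‖y i‖ ^ 2))
    (v : ℕ → EuclideanSpace ℝ (Fin d)) (hv0 : v 0 ≠ 0)
    (hv : ∀ i, 1 ≤ i → i ≤ n → v i = v (i - 1) + (η * ⟪y i, v (i - 1)⟫) • y i)
    (i : ℕ) (hi : 1 ≤ i) (hin : i ≤ n) :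
    η * ⟪y i, ‖v (i - 1)‖⁻¹ • v (i - 1)⟫ ^ 2 ≤
      Real.log (‖v i‖ ^ 2 / ‖v (i - 1)‖ ^ 2) :=
  stmt_6_general hn y η hη hη' v hv i hi hin
end

section
/- Under Oja's update rule, if additionally η ≤ 0.1 / max_{i∈[n]} ‖y_i‖₂², then for all integers 0 ≤ a < b ≤ n, log(‖v_b‖₂² / ‖v_a‖₂²) ≥ ∑_{i=a+1}^{b} η · ⟨y_i, v̂_{i−1}⟩². -/
open RealInnerProductSpace

lemma helper_log_ineq (t : ℝ) (h0 : 0 ≤ t) (h1 : t ≤ 0.1) :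
    t ≤ Real.log (1 + 2 * t) := by
  have h2 : (0:ℝ) < 1 + 2 * t := by linarith
  rw [Real.le_log_iff_exp_le h2]
  have h3 : 1 - t ≤ Real.exp (-t) := by
    have := Real.add_one_le_exp (-t); linarith
  have h4 : (0:ℝ) < 1 - t := by norm_num at h1 ⊢; linarith
  have h5 : Real.exp t * (1 - t) ≤ Real.exp t * Real.exp (-t) :=
    mul_le_mul_of_nonneg_left h3 (Real.exp_nonneg t)
  rw [← Real.exp_add] at h5
  simp only [add_neg_cancel, Real.exp_zero] at h5
  nlinarith [Real.exp_pos t]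

lemma helper_norm_sq {d : ℕ} (u z : EuclideanSpace ℝ (Fin d)) (η : ℝ) :
    ‖u + (η * ⟪z, u⟫) • z‖ ^ 2 =
      ‖u‖ ^ 2 + 2 * η * ⟪z, u⟫ ^ 2 + η ^ 2 * ⟪z, u⟫ ^ 2 * ‖z‖ ^ 2 := by
  rw [norm_add_sq_real, real_inner_smul_right, norm_smul]
  rw [real_inner_comm u z]
  simp only [Real.norm_eq_abs, mul_pow, sq_abs]
  ring

set_option maxHeartbeats 1000000 in
theorem stmt_7 {n d : ℕ} (hn : 1 ≤ n) (hd : 1 ≤ d)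
    (y : ℕ → EuclideanSpace ℝ (Fin d)) (η : ℝ) (hη : 0 < η)
    (hη' : η ≤ 0.1 / ((Finset.Icc 1 n).sup' (Finset.nonempty_Icc.mpr hn)
      fun i => ‖y i‖ ^ 2))
    (v : ℕ → EuclideanSpace ℝ (Fin d)) (hv0 : v 0 ≠ 0)
    (hv : ∀ i, 1 ≤ i → i ≤ n → v i = v (i - 1) + (η * ⟪y i, v (i - 1)⟫) • y i)
    (a b : ℕ) (hab : a < b) (hbn : b ≤ n) :
    ∑ i ∈ Finset.Icc (a + 1) b, η * ⟪y i, ‖v (i - 1)‖⁻¹ • v (i - 1)⟫ ^ 2 ≤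
      Real.log (‖v b‖ ^ 2 / ‖v a‖ ^ 2) := by
  set M := ((Finset.Icc 1 n).sup' (Finset.nonempty_Icc.mpr hn)
      fun i => ‖y i‖ ^ 2) with hM
  have h1mem : (1 : ℕ) ∈ Finset.Icc 1 n := Finset.mem_Icc.mpr ⟨le_refl 1, hn⟩
  have hM0 : 0 ≤ M := le_trans (sq_nonneg ‖y 1‖)
    (Finset.le_sup' (fun i => ‖y i‖ ^ 2) h1mem)
  have hMpos : 0 < M := by
    rcases hM0.lt_or_eq with h | h
    · exact h
    · exfalso; rw [← h] at hη'; simp at hη'; linarith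
  have hηM : ∀ i, 1 ≤ i → i ≤ n → η * ‖y i‖ ^ 2 ≤ 0.1 := by
    intro i hi1 hi2
    have h1 : ‖y i‖ ^ 2 ≤ M :=
      Finset.le_sup' (fun i => ‖y i‖ ^ 2) (Finset.mem_Icc.mpr ⟨hi1, hi2⟩)
    have h2 : η * M ≤ 0.1 := (le_div_iff₀ hMpos).mp hη'
    nlinarith [hη.le]
  -- positivity of norms
  have hpos : ∀ i, i ≤ n → 0 < ‖v i‖ := by
    intro i
    induction i with
    | zero => intro _; exact norm_pos_iff.mpr hv0
    | succ k ih =>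
      intro hk
      have hk' : k ≤ n := Nat.le_of_succ_le hk
      have hvk := ih hk'
      have hrw := hv (k + 1) (Nat.le_add_left 1 k) hk
      simp only [Nat.add_sub_cancel] at hrw
      rw [hrw]
      have hid := helper_norm_sq (v k) (y (k + 1)) η
      have hnn : 0 < ‖v k + (η * ⟪y (k+1), v k⟫) • y (k+1)‖ ^ 2 := by
        rw [hid]
        nlinarith [sq_nonneg (⟪y (k+1), v k⟫ * ‖y (k+1)‖)]
      nlinarith [norm_nonneg (v k + (η * ⟪y (k+1), v k⟫) • y (k+1))]
  -- per-step inequality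
  have key : ∀ i, 1 ≤ i → i ≤ n →
      η * ⟪y i, ‖v (i - 1)‖⁻¹ • v (i - 1)⟫ ^ 2 ≤
        Real.log (‖v i‖ ^ 2) - Real.log (‖v (i - 1)‖ ^ 2) := by
    intro i hi1 hi2
    have hiu : i - 1 ≤ n := le_trans (Nat.sub_le i 1) hi2
    set u := v (i - 1) with hu
    have hupos : 0 < ‖u‖ := hpos (i - 1) hiu
    set c : ℝ := ⟪y i, u⟫ with hc
    have hinner : ⟪y i, ‖u‖⁻¹ • u⟫ = ‖u‖⁻¹ * c := real_inner_smul_right _ _ _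
    set t : ℝ := η * (‖u‖⁻¹ * c) ^ 2 with ht
    have ht0 : 0 ≤ t := by positivity
    have hcs : c ^ 2 ≤ ‖y i‖ ^ 2 * ‖u‖ ^ 2 := by
      have := abs_real_inner_le_norm (y i) u
      nlinarith [abs_nonneg c, sq_abs c, norm_nonneg (y i), norm_nonneg u]
    have ht1 : t ≤ 0.1 := by
      have h1 : (‖u‖⁻¹ * c) ^ 2 ≤ ‖y i‖ ^ 2 := by
        rw [mul_pow]
        have hiu2 : (‖u‖⁻¹) ^ 2 * ‖u‖ ^ 2 = 1 := by
          field_simp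
        nlinarith [sq_nonneg (‖u‖⁻¹), sq_nonneg ‖u‖]
      have := hηM i hi1 hi2
      nlinarith [hη.le]
    have hrw := hv i hi1 hi2
    have hid : ‖v i‖ ^ 2 = ‖u‖ ^ 2 + 2 * η * c ^ 2 + η ^ 2 * c ^ 2 * ‖y i‖ ^ 2 := by
      rw [hrw]; exact helper_norm_sq u (y i) η
    have hratio : ‖u‖ ^ 2 * (1 + 2 * t) ≤ ‖v i‖ ^ 2 := by
      rw [hid, ht]
      have : ‖u‖ ^ 2 * (‖u‖⁻¹) ^ 2 = 1 := by field_simp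
      nlinarith [sq_nonneg c, sq_nonneg ‖y i‖, sq_nonneg (η * c * ‖y i‖)]
    have hu2 : (0:ℝ) < ‖u‖ ^ 2 := by positivity
    have h12t : (0:ℝ) < 1 + 2 * t := by linarith
    have hvi2 : (0:ℝ) < ‖v i‖ ^ 2 := lt_of_lt_of_le (by nlinarith) hratio
    have hlogd : Real.log (‖v i‖ ^ 2) - Real.log (‖u‖ ^ 2) =
        Real.log (‖v i‖ ^ 2 / ‖u‖ ^ 2) :=
      (Real.log_div (ne_of_gt hvi2) (ne_of_gt hu2)).symm
    have hdiv : 1 + 2 * t ≤ ‖v i‖ ^ 2 / ‖u‖ ^ 2 := by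
      rw [le_div_iff₀ hu2]; nlinarith
    have hlog2 : Real.log (1 + 2 * t) ≤ Real.log (‖v i‖ ^ 2 / ‖u‖ ^ 2) :=
      Real.log_le_log h12t hdiv
    have hfinal := le_trans (helper_log_ineq t ht0 ht1) hlog2
    rw [hinner, ← ht, hlogd]
    exact hfinal
  -- telescoping sum
  have tel : ∀ m, a < m → m ≤ n →
      ∑ i ∈ Finset.Icc (a + 1) m, η * ⟪y i, ‖v (i - 1)‖⁻¹ • v (i - 1)⟫ ^ 2 ≤
        Real.log (‖v m‖ ^ 2) - Real.log (‖v a‖ ^ 2) := by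
    intro m
    induction m with
    | zero => intro h; omega
    | succ k ih =>
      intro hak hkn
      rcases Nat.lt_or_ge a k with h | h
      · rw [Finset.sum_Icc_succ_top (by omega : a + 1 ≤ k + 1)]
        have h1 := ih h (Nat.le_of_succ_le hkn)
        have h2 := key (k + 1) (by omega) hkn
        simp only [Nat.add_sub_cancel] at h2 ⊢
        linarith
      · have hak' : a = k := by omega
        subst hak'
        rw [show Finset.Icc (a + 1) (a + 1) = {a + 1} from Finset.Icc_self _,
          Finset.sum_singleton]
        exact key (a + 1) (by omega) hkn
  have hb2 : (0:ℝ) < ‖v b‖ ^ 2 := by have := hpos b hbn; positivity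
  have ha2 : (0:ℝ) < ‖v a‖ ^ 2 := by
    have := hpos a (le_trans (le_of_lt hab) hbn); positivity
  rw [Real.log_div (ne_of_gt hb2) (ne_of_gt ha2)]
  exact tel b hab hbn
end

section
/- (Growth implies correctness.) Under Oja's update rule with η ≤ 0.1 / max_{i∈[n]} ‖y_i‖₂², for every starting vector v_0 ≠ 0 and every i ∈ {1,…,n}, one has ‖P v̂_i‖₂ ≤ √α + ‖P v_0‖₂ / ‖v_i‖₂. In particular, if v_0 = v*, then ‖P v̂_i‖₂ ≤ √α for every i ∈ {1,…,n}. -/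
open RealInnerProductSpace

theorem stmt_9 {n d : ℕ} (hn : 1 ≤ n) (hd : 1 ≤ d)
    (y : ℕ → EuclideanSpace ℝ (Fin d)) (η : ℝ) (hη : 0 < η)
    (hη' : η ≤ 0.1 / ((Finset.Icc 1 n).sup' (Finset.nonempty_Icc.mpr hn)
      fun i => ‖y i‖ ^ 2))
    (vstar : EuclideanSpace ℝ (Fin d)) (hvstar : ‖vstar‖ = 1)
    (α : ℝ) (hα : 0 < α)
    (halpha : ∀ w : EuclideanSpace ℝ (Fin d), ‖w‖ ≤ 1 → ⟪w, vstar⟫ = 0 →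
      η * ∑ i ∈ Finset.Icc 1 n, ⟪w, y i⟫ ^ 2 ≤ α)
    (P : EuclideanSpace ℝ (Fin d) → EuclideanSpace ℝ (Fin d))
    (hP : ∀ x, P x = x - ⟪vstar, x⟫ • vstar)
    (v : ℕ → EuclideanSpace ℝ (Fin d)) (hv0 : v 0 ≠ 0)
    (hv : ∀ i, 1 ≤ i → i ≤ n → v i = v (i - 1) + (η * ⟪y i, v (i - 1)⟫) • y i)
    (i : ℕ) (hi : 1 ≤ i) (hin : i ≤ n) :
    ‖P (‖v i‖⁻¹ • v i)‖ ≤ Real.sqrt α + ‖P (v 0)‖ / ‖v i‖ ∧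
      (v 0 = vstar → ‖P (‖v i‖⁻¹ • v i)‖ ≤ Real.sqrt α) := by
  have hvv : ⟪vstar, vstar⟫ = 1 := by
    rw [real_inner_self_eq_norm_sq, hvstar]; norm_num
  -- P is homogeneous
  have hPlin : ∀ (c : ℝ) x, P (c • x) = c • P x := by
    intro c x
    rw [hP, hP, real_inner_smul_right, smul_sub, smul_smul]
  -- P x ⊥ vstar
  have hPo : ∀ x, ⟪P x, vstar⟫ = 0 := by
    intro x
    rw [hP, inner_sub_left, real_inner_smul_left, real_inner_comm x vstar, hvv]
    ring
  -- ⟪z, x⟫ = ⟪z, P x⟫ when z ⊥ vstar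
  have hPvx : ∀ x z, ⟪z, vstar⟫ = 0 → ⟪z, x⟫ = ⟪z, P x⟫ := by
    intro x z hz
    rw [hP, inner_sub_right, real_inner_smul_right, hz]
    ring
  -- norm recursion
  have hrec : ∀ j, 1 ≤ j → j ≤ n →
      ‖v j‖ ^ 2 = ‖v (j-1)‖ ^ 2 + (2*η + η^2 * ‖y j‖^2) * ⟪y j, v (j-1)⟫ ^ 2 := by
    intro j hj1 hj2
    rw [hv j hj1 hj2, norm_add_sq_real, real_inner_smul_right, norm_smul]
    simp only [Real.norm_eq_abs, mul_pow, sq_abs, real_inner_comm (y j)]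
    ring
  -- telescoping lower bound for norms
  have hsum : ∀ m, m ≤ n →
      ‖v 0‖ ^ 2 + 2*η*(∑ j ∈ Finset.Icc 1 m, ⟪y j, v (j-1)⟫ ^ 2) ≤ ‖v m‖ ^ 2 := by
    intro m
    induction m with
    | zero => intro _; simp
    | succ m ih =>
      intro hm
      have ihm := ih (by omega)
      rw [Finset.sum_Icc_succ_top (by omega : 1 ≤ m + 1)]
      have hr := hrec (m+1) (by omega) hm
      simp only [Nat.add_sub_cancel] at hr ⊢
      nlinarith [sq_nonneg (η * ‖y (m+1)‖ * ⟪y (m+1), v m⟫), sq_nonneg ⟪y (m+1), v m⟫]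
  -- inner product telescoping
  have hinner : ∀ (w : EuclideanSpace ℝ (Fin d)), ∀ m, m ≤ n →
      ⟪w, v m⟫ = ⟪w, v 0⟫ + η * ∑ j ∈ Finset.Icc 1 m, ⟪y j, v (j-1)⟫ * ⟪w, y j⟫ := by
    intro w m
    induction m with
    | zero => intro _; simp
    | succ m ih =>
      intro hm
      rw [Finset.sum_Icc_succ_top (by omega : 1 ≤ m + 1)]
      rw [hv (m+1) (by omega) hm, inner_add_right, real_inner_smul_right]
      simp only [Nat.add_sub_cancel]
      rw [ih (by omega)]
      ring
  have hv0pos : (0:ℝ) < ‖v 0‖ := norm_pos_iff.mpr hv0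
  have hsq : (0:ℝ) ≤ ∑ j ∈ Finset.Icc 1 i, ⟪y j, v (j-1)⟫ ^ 2 :=
    Finset.sum_nonneg fun j _ => sq_nonneg _
  have hvi : (0:ℝ) < ‖v i‖ := by
    have := hsum i hin
    nlinarith [norm_nonneg (v i), mul_nonneg hη.le hsq]
  have hvine : ‖v i‖ ≠ 0 := ne_of_gt hvi
  -- main bound : ‖P (v i)‖ ≤ √α * ‖v i‖ + ‖P (v 0)‖
  have hmain : ‖P (v i)‖ ≤ Real.sqrt α * ‖v i‖ + ‖P (v 0)‖ := by
    by_cases h0 : P (v i) = 0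
    · rw [h0, norm_zero]
      positivity
    · set w : EuclideanSpace ℝ (Fin d) := ‖P (v i)‖⁻¹ • P (v i) with hw
      have hPvipos : (0:ℝ) < ‖P (v i)‖ := norm_pos_iff.mpr h0
      have hwnorm : ‖w‖ = 1 := by
        rw [hw, norm_smul, norm_inv, norm_norm, inv_mul_cancel₀ (ne_of_gt hPvipos)]
      have hwo : ⟪w, vstar⟫ = 0 := by
        rw [hw, real_inner_smul_left, hPo, mul_zero]
      have hwvi : ⟪w, v i⟫ = ‖P (v i)‖ := by
        rw [hPvx (v i) w hwo, hw, real_inner_smul_left, real_inner_self_eq_norm_sq]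
        field_simp
      have hwv0 : ⟪w, v 0⟫ ≤ ‖P (v 0)‖ := by
        rw [hPvx (v 0) w hwo]
        calc ⟪w, P (v 0)⟫ ≤ ‖w‖ * ‖P (v 0)‖ := real_inner_le_norm w (P (v 0))
          _ = ‖P (v 0)‖ := by rw [hwnorm, one_mul]
      -- the sums
      set S := ∑ j ∈ Finset.Icc 1 i, ⟪y j, v (j-1)⟫ * ⟪w, y j⟫ with hS
      set A := ∑ j ∈ Finset.Icc 1 i, ⟪w, y j⟫ ^ 2 with hA
      set B := ∑ j ∈ Finset.Icc 1 i, ⟪y j, v (j-1)⟫ ^ 2 with hB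
      have hAnn : 0 ≤ A := Finset.sum_nonneg fun j _ => sq_nonneg _
      have hAle : η * A ≤ α := by
        refine le_trans ?_ (halpha w (le_of_eq hwnorm) hwo)
        have : A ≤ ∑ j ∈ Finset.Icc 1 n, ⟪w, y j⟫ ^ 2 := by
          apply Finset.sum_le_sum_of_subset_of_nonneg
          · exact Finset.Icc_subset_Icc_right hin
          · intro j _ _; exact sq_nonneg _
        nlinarith
      have hBle : 2 * η * B ≤ ‖v i‖ ^ 2 := by
        have := hsum i hin
        nlinarith [sq_nonneg ‖v 0‖]
      have hCS : S ^ 2 ≤ B * A :=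
        Finset.sum_mul_sq_le_sq_mul_sq _ _ _
      have hprod : (2 * η * B) * (η * A) ≤ ‖v i‖ ^ 2 * α := by
        exact mul_le_mul hBle hAle (mul_nonneg hη.le hAnn) (by positivity)
      have hetaS : η * S ≤ Real.sqrt α * ‖v i‖ := by
        have hsq2 : (η * S) ^ 2 ≤ (Real.sqrt α * ‖v i‖) ^ 2 := by
          have h1 : (Real.sqrt α * ‖v i‖) ^ 2 = α * ‖v i‖ ^ 2 := by
            rw [mul_pow, Real.sq_sqrt hα.le]
          nlinarith [mul_le_mul_of_nonneg_left hCS (sq_nonneg η),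
            mul_nonneg (sq_nonneg η) (mul_nonneg hsq hAnn)]
        have h2 := Real.sqrt_le_sqrt hsq2
        rw [Real.sqrt_sq_eq_abs, Real.sqrt_sq_eq_abs] at h2
        calc η * S ≤ |η * S| := le_abs_self _
          _ ≤ |Real.sqrt α * ‖v i‖| := h2
          _ = Real.sqrt α * ‖v i‖ := abs_of_nonneg
              (mul_nonneg (Real.sqrt_nonneg α) hvi.le)
      have := hinner w i hin
      rw [hwvi] at this
      rw [this]
      linarith
  have hgoal1 : ‖P (‖v i‖⁻¹ • v i)‖ ≤ Real.sqrt α + ‖P (v 0)‖ / ‖v i‖ := by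
    rw [hPlin, norm_smul, norm_inv, norm_norm, inv_mul_eq_div, div_le_iff₀ hvi,
      add_mul, div_mul_cancel₀ _ hvine]
    linarith
  refine ⟨hgoal1, fun h0 => ?_⟩
  have : P (v 0) = 0 := by
    rw [hP, h0, hvv, one_smul, sub_self]
  rw [this, norm_zero, zero_div, add_zero] at hgoal1
  exact hgoal1
end

section
/- Suppose v_0 = v*. Under Oja's update rule with η ≤ 0.1 / max_{i∈[n]} ‖y_i‖₂², for any two time steps 0 ≤ a < b ≤ n, one has ‖P v̂_b − P v̂_a‖₂² ≤ 50 · α · log(‖v_b‖₂ / ‖v_a‖₂). -/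
/-!
Fix `w ⊥ v*` and write `uₘ = vₘ / ‖vₘ‖`. Each Oja step gives
`‖vᵢ‖² ≥ ‖vᵢ₋₁‖² + 2η⟪yᵢ, vᵢ₋₁⟫²`, so Cauchy–Schwarz applied to
`⟪w, v_b - v_a⟫ = ∑_{a<i≤b} η⟪yᵢ, vᵢ₋₁⟫⟪w, yᵢ⟫` yields
`⟪w, v_b - v_a⟫² ≤ α‖w‖² (‖v_b‖² - ‖v_a‖²) / 2`; as `⟪w, v₀⟫ = 0`, the case `a = 0` bounds
`⟪w, v_a⟫²` by `α‖w‖²‖v_a‖² / 2`. Splitting `⟪w, u_b - u_a⟫` into these two pieces gives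
`⟪w, u_b - u_a⟫² ≤ 2α‖w‖² (1 - r)` with `r = ‖v_a‖ / ‖v_b‖`, and `1 - r ≤ log (1 / r)`.
Testing against `w = P (u_b - u_a)` gives `‖P u_b - P u_a‖² ≤ 2α log (‖v_b‖ / ‖v_a‖)`.
-/

open RealInnerProductSpace
open Finset

section

variable {E : Type*} [NormedAddCommGroup E] [InnerProductSpace ℝ E]

lemma norm_sub_inner_smul_sq_le {u x : E} {K : ℝ} (hu : ‖u‖ = 1) (hK0 : 0 ≤ K)
    (hK : ∀ w, ⟪w, u⟫ = 0 → ⟪w, x⟫ ^ 2 ≤ K * ‖w‖ ^ 2) : ‖x - ⟪u, x⟫ • u‖ ^ 2 ≤ K := by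
  set px := x - ⟪u, x⟫ • u
  have hpx_u : ⟪px, u⟫ = 0 := by
    rw [inner_sub_left, real_inner_smul_left, real_inner_self_eq_norm_sq, hu, real_inner_comm]
    ring
  have hpx_x : ⟪px, x⟫ = ‖px‖ ^ 2 := by
    rw [← real_inner_self_eq_norm_sq, inner_sub_right px x, real_inner_smul_right,
      real_inner_comm, hpx_u, mul_zero, sub_zero]
  have h := hK px hpx_u
  rw [hpx_x] at h
  rcases (sq_nonneg ‖px‖).eq_or_lt with h0 | hpos
  · rw [← h0]
    exact hK0
  · nlinarith

lemma mul_sum_inner_sq_le {ι : Type*} {s : Finset ι} {y : ι → E} {u : E} {η α : ℝ}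
    (h : ∀ w : E, ‖w‖ ≤ 1 → ⟪w, u⟫ = 0 → η * ∑ i ∈ s, ⟪w, y i⟫ ^ 2 ≤ α) {w : E}
    (hw : ⟪w, u⟫ = 0) : η * ∑ i ∈ s, ⟪w, y i⟫ ^ 2 ≤ α * ‖w‖ ^ 2 := by
  rcases eq_or_ne w 0 with rfl | hw0
  · simp
  have hnw : 0 < ‖w‖ := norm_pos_iff.2 hw0
  have h := h (‖w‖⁻¹ • w) (by rw [norm_smul, norm_inv, norm_norm, inv_mul_cancel₀ hnw.ne'])
    (by rw [real_inner_smul_left, hw, mul_zero])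
  simp only [real_inner_smul_left, mul_pow, ← mul_sum, inv_pow] at h
  rw [mul_left_comm, inv_mul_le_iff₀ (by positivity)] at h
  linarith

lemma sq_div_sub_div_le {x z p q c : ℝ} (hp : 0 < p) (hpq : p ≤ q) (hx : x ^ 2 ≤ c * p ^ 2 / 2)
    (hz : z ^ 2 ≤ c * (q ^ 2 - p ^ 2) / 2) :
    ((x + z) / q - x / p) ^ 2 ≤ 2 * c * (1 - p / q) := by
  have hq : 0 < q := hp.trans_le hpq
  obtain ⟨s, rfl⟩ : ∃ s, z = s * q := ⟨z / q, by field_simp⟩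
  obtain ⟨t, rfl⟩ : ∃ t, x = t * p := ⟨x / p, by field_simp⟩
  obtain ⟨r, hr0, hr1, rfl⟩ : ∃ r, 0 < r ∧ r ≤ 1 ∧ p = r * q :=
    ⟨p / q, div_pos hp hq, (div_le_one hq).2 hpq, by field_simp⟩
  have e : (t * (r * q) + s * q) / q - t * (r * q) / (r * q) = s - t * (1 - r) := by
    field_simp
    ring
  rw [e, mul_div_cancel_right₀ _ hq.ne']
  have ht : t ^ 2 ≤ c / 2 := by nlinarith [pow_pos (mul_pos hr0 hq) 2]
  have hs : s ^ 2 ≤ c * (1 - r ^ 2) / 2 := by nlinarith [pow_pos hq 2]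
  -- `(s - t (1 - r))² ≤ 2 s² + 2 t² (1 - r)²`, and `(1 - r²) + (1 - r)² = 2 (1 - r)`
  nlinarith [sq_nonneg (s + t * (1 - r)), mul_le_mul_of_nonneg_right ht (sq_nonneg (1 - r))]

def IsOjaTrajectory (y : ℕ → E) (η : ℝ) (n : ℕ) (v : ℕ → E) : Prop :=
  ∀ i, 1 ≤ i → i ≤ n → v i = v (i - 1) + (η * ⟪y i, v (i - 1)⟫) • y i

lemma norm_add_oja_step_sq (v y : E) (η : ℝ) :
    ‖v + (η * ⟪y, v⟫) • y‖ ^ 2 = ‖v‖ ^ 2 + (2 * η + η ^ 2 * ‖y‖ ^ 2) * ⟪y, v⟫ ^ 2 := by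
  rw [norm_add_sq_real, real_inner_smul_right, norm_smul, Real.norm_eq_abs, mul_pow, sq_abs,
    real_inner_comm]
  ring

namespace IsOjaTrajectory

variable {y v : ℕ → E} {η : ℝ} {n a b : ℕ}

lemma succ (hv : IsOjaTrajectory y η n v) (hb : b < n) :
    v (b + 1) = v b + (η * ⟪y (b + 1), v b⟫) • y (b + 1) :=
  hv (b + 1) (by omega) hb

lemma two_mul_sum_le_norm_sq_sub (hv : IsOjaTrajectory y η n v) (hab : a ≤ b) (hbn : b ≤ n) :
    2 * ∑ i ∈ Ioc a b, η * ⟪y i, v (i - 1)⟫ ^ 2 ≤ ‖v b‖ ^ 2 - ‖v a‖ ^ 2 := by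
  induction b, hab using Nat.le_induction with
  | base => simp
  | succ b hab ih =>
    rw [sum_Ioc_succ_top hab, hv.succ hbn, norm_add_oja_step_sq, Nat.add_sub_cancel]
    nlinarith [ih (by omega), sq_nonneg (η * ‖y (b + 1)‖ * ⟪y (b + 1), v b⟫)]

lemma norm_mono (hv : IsOjaTrajectory y η n v) (hη : 0 ≤ η) (hab : a ≤ b) (hbn : b ≤ n) :
    ‖v a‖ ≤ ‖v b‖ := by
  have hsum : 0 ≤ ∑ i ∈ Ioc a b, η * ⟪y i, v (i - 1)⟫ ^ 2 := by positivity
  have := hv.two_mul_sum_le_norm_sq_sub hab hbn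
  exact pow_le_pow_iff_left₀ (norm_nonneg _) (norm_nonneg _) two_ne_zero |>.1 (by linarith)

lemma inner_sub_eq_sum (hv : IsOjaTrajectory y η n v) (w : E) (hab : a ≤ b) (hbn : b ≤ n) :
    ⟪w, v b - v a⟫ = ∑ i ∈ Ioc a b, η * ⟪y i, v (i - 1)⟫ * ⟪w, y i⟫ := by
  induction b, hab using Nat.le_induction with
  | base => simp
  | succ b hab ih =>
    rw [sum_Ioc_succ_top hab, ← ih (by omega), hv.succ hbn, Nat.add_sub_cancel, inner_sub_right,
      inner_sub_right, inner_add_right, real_inner_smul_right]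
    ring

lemma inner_sub_sq_le (hv : IsOjaTrajectory y η n v) (hη : 0 ≤ η) {w : E} {c : ℝ}
    (hc : η * ∑ i ∈ Icc 1 n, ⟪w, y i⟫ ^ 2 ≤ c) (hab : a ≤ b) (hbn : b ≤ n) :
    ⟪w, v b - v a⟫ ^ 2 ≤ c * ((‖v b‖ ^ 2 - ‖v a‖ ^ 2) / 2) := by
  set S := ∑ i ∈ Ioc a b, η * ⟪y i, v (i - 1)⟫ ^ 2
  have hcs := sum_mul_sq_le_sq_mul_sq (Ioc a b) (fun i => η * ⟪y i, v (i - 1)⟫)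
    (fun i => ⟪w, y i⟫)
  have hη_sum : ∑ i ∈ Ioc a b, (η * ⟪y i, v (i - 1)⟫) ^ 2 = η * S := by
    rw [mul_sum]
    exact sum_congr rfl fun i _ => by ring
  rw [← hv.inner_sub_eq_sum w hab hbn, hη_sum] at hcs
  have hsub : Ioc a b ⊆ Icc 1 n := fun i hi => by
    simp only [mem_Ioc, mem_Icc] at hi ⊢
    omega
  have hc' : η * ∑ i ∈ Ioc a b, ⟪w, y i⟫ ^ 2 ≤ c :=
    (mul_le_mul_of_nonneg_left (sum_le_sum_of_subset_of_nonneg hsub fun _ _ _ => sq_nonneg _)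
      hη).trans hc
  have hS : 0 ≤ S := by positivity
  have hc0 : 0 ≤ c := le_trans (by positivity) hc'
  calc ⟪w, v b - v a⟫ ^ 2 ≤ S * (η * ∑ i ∈ Ioc a b, ⟪w, y i⟫ ^ 2) := hcs.trans_eq (by ring)
    _ ≤ S * c := mul_le_mul_of_nonneg_left hc' hS
    _ ≤ c * ((‖v b‖ ^ 2 - ‖v a‖ ^ 2) / 2) := by
      nlinarith [hv.two_mul_sum_le_norm_sq_sub hab hbn]

lemma inner_normalize_sub_sq_le (hv : IsOjaTrajectory y η n v) (hη : 0 ≤ η) {w : E} {c : ℝ}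
    (hw : ⟪w, v 0⟫ = 0) (hv0 : 0 < ‖v 0‖) (hc : η * ∑ i ∈ Icc 1 n, ⟪w, y i⟫ ^ 2 ≤ c)
    (hab : a ≤ b) (hbn : b ≤ n) :
    ⟪w, ‖v b‖⁻¹ • v b - ‖v a‖⁻¹ • v a⟫ ^ 2 ≤ 2 * c * (1 - ‖v a‖ / ‖v b‖) := by
  have hva : 0 < ‖v a‖ := hv0.trans_le (hv.norm_mono hη (Nat.zero_le a) (by omega))
  have hx : ⟪w, v a⟫ ^ 2 ≤ c * ‖v a‖ ^ 2 / 2 := by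
    have h0a := hv.inner_sub_sq_le hη hc (Nat.zero_le a) (by omega)
    rw [inner_sub_right, hw, sub_zero] at h0a
    have hc0 : 0 ≤ c := le_trans (by positivity) hc
    nlinarith [sq_nonneg ‖v 0‖]
  have hz := hv.inner_sub_sq_le hη hc hab hbn
  have hvb : ⟪w, v b⟫ = ⟪w, v a⟫ + ⟪w, v b - v a⟫ := by
    rw [inner_sub_right]
    ring
  rw [inner_sub_right, real_inner_smul_right, real_inner_smul_right, hvb, inv_mul_eq_div,
    inv_mul_eq_div]
  exact sq_div_sub_div_le hva (hv.norm_mono hη hab hbn) hx (by linarith)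

end IsOjaTrajectory

end

theorem stmt_10_general {n d : ℕ}
    (y : ℕ → EuclideanSpace ℝ (Fin d)) (η : ℝ) (hη : 0 < η)
    (vstar : EuclideanSpace ℝ (Fin d)) (hvstar : ‖vstar‖ = 1)
    (α : ℝ) (hα : 0 < α)
    (halpha : ∀ w : EuclideanSpace ℝ (Fin d), ‖w‖ ≤ 1 → ⟪w, vstar⟫ = 0 →
      η * ∑ i ∈ Finset.Icc 1 n, ⟪w, y i⟫ ^ 2 ≤ α)
    (P : EuclideanSpace ℝ (Fin d) → EuclideanSpace ℝ (Fin d))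
    (hP : ∀ x, P x = x - ⟪vstar, x⟫ • vstar)
    (v : ℕ → EuclideanSpace ℝ (Fin d)) (hv0 : v 0 = vstar)
    (hv : ∀ i, 1 ≤ i → i ≤ n → v i = v (i - 1) + (η * ⟪y i, v (i - 1)⟫) • y i)
    (a b : ℕ) (hab : a < b) (hbn : b ≤ n) :
    ‖P (‖v b‖⁻¹ • v b) - P (‖v a‖⁻¹ • v a)‖ ^ 2 ≤
      50 * α * Real.log (‖v b‖ / ‖v a‖) := by
  have hv : IsOjaTrajectory y η n v := hv
  have hv0_pos : 0 < ‖v 0‖ := by rw [hv0, hvstar]; exact one_pos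
  have hva : 0 < ‖v a‖ := hv0_pos.trans_le (hv.norm_mono hη.le (Nat.zero_le a) (by omega))
  have hvab : ‖v a‖ ≤ ‖v b‖ := hv.norm_mono hη.le hab.le hbn
  set e := ‖v b‖⁻¹ • v b - ‖v a‖⁻¹ • v a
  have hPe : P (‖v b‖⁻¹ • v b) - P (‖v a‖⁻¹ • v a) = e - ⟪vstar, e⟫ • vstar := by
    simp only [e, hP, inner_sub_right, sub_smul]
    abel
  have hratio : 0 ≤ 1 - ‖v a‖ / ‖v b‖ := sub_nonneg.2 ((div_le_one (hva.trans_le hvab)).2 hvab)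
  have hlog : 1 - ‖v a‖ / ‖v b‖ ≤ Real.log (‖v b‖ / ‖v a‖) := by
    simpa using Real.one_sub_inv_le_log_of_pos (div_pos (hva.trans_le hvab) hva)
  calc ‖P (‖v b‖⁻¹ • v b) - P (‖v a‖⁻¹ • v a)‖ ^ 2 ≤ 2 * α * (1 - ‖v a‖ / ‖v b‖) := by
        rw [hPe]
        refine norm_sub_inner_smul_sq_le hvstar (by positivity) fun w hw => ?_
        refine (hv.inner_normalize_sub_sq_le hη.le (hv0 ▸ hw) hv0_pos
          (mul_sum_inner_sq_le halpha hw) hab.le hbn).trans_eq ?_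
        ring
    _ ≤ 2 * α * Real.log (‖v b‖ / ‖v a‖) := by gcongr
    _ ≤ 50 * α * Real.log (‖v b‖ / ‖v a‖) := by
        have := hratio.trans hlog
        gcongr
        norm_num

theorem stmt_10 {n d : ℕ} (hn : 1 ≤ n) (hd : 1 ≤ d)
    (y : ℕ → EuclideanSpace ℝ (Fin d)) (η : ℝ) (hη : 0 < η)
    (hη' : η ≤ 0.1 / ((Finset.Icc 1 n).sup' (Finset.nonempty_Icc.mpr hn)
      fun i => ‖y i‖ ^ 2))
    (vstar : EuclideanSpace ℝ (Fin d)) (hvstar : ‖vstar‖ = 1)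
    (α : ℝ) (hα : 0 < α)
    (halpha : ∀ w : EuclideanSpace ℝ (Fin d), ‖w‖ ≤ 1 → ⟪w, vstar⟫ = 0 →
      η * ∑ i ∈ Finset.Icc 1 n, ⟪w, y i⟫ ^ 2 ≤ α)
    (P : EuclideanSpace ℝ (Fin d) → EuclideanSpace ℝ (Fin d))
    (hP : ∀ x, P x = x - ⟪vstar, x⟫ • vstar)
    (v : ℕ → EuclideanSpace ℝ (Fin d)) (hv0 : v 0 = vstar)
    (hv : ∀ i, 1 ≤ i → i ≤ n → v i = v (i - 1) + (η * ⟪y i, v (i - 1)⟫) • y i)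
    (a b : ℕ) (hab : a < b) (hbn : b ≤ n) :
    ‖P (‖v b‖⁻¹ • v b) - P (‖v a‖⁻¹ • v a)‖ ^ 2 ≤
      50 * α * Real.log (‖v b‖ / ‖v a‖) :=
  stmt_10_general y η hη vstar hvstar α hα halpha P hP v hv0 hv a b hab hbn
end

section
/- Let n = 2^L for an integer L ≥ 1, and let a ∈ ℝ^n with a_1 = 0. For j ∈ {0,1,…,n} and k ∈ {0,1,…,L}, define b_{j,k} := a_{1 + 2^k · j} if 1 + 2^k · j ≤ n, and b_{j,k} := 0 otherwise (so b_{0,k} = a_1 = 0). Then max_{j∈[n]} a_j² ≤ L · ∑_{k=0}^{L−1} ∑_{j=1}^{n} (b_{j,k} − b_{j−1,k})². -/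
theorem stmt_11 {n L : ℕ} (hL : 1 ≤ L) (hn : n = 2 ^ L)
    (a : ℕ → ℝ) (ha1 : a 1 = 0)
    (b : ℕ → ℕ → ℝ)
    (hb : ∀ j k : ℕ, b j k = if 1 + 2 ^ k * j ≤ n then a (1 + 2 ^ k * j) else 0)
    (hne : (Finset.Icc 1 n).Nonempty) :
    ((Finset.Icc 1 n).sup' hne fun j => a j ^ 2) ≤
      (L : ℝ) * ∑ k ∈ Finset.range L, ∑ j ∈ Finset.Icc 1 n,
        (b j k - b (j - 1) k) ^ 2 := by
  apply Finset.sup'_le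
  intro i hi
  obtain ⟨hi1, hin⟩ := Finset.mem_Icc.mp hi
  have hn1 : 1 ≤ n := le_trans hi1 hin
  set f : ℕ → ℝ := fun k => b ((i - 1) / 2 ^ k) k with hf
  have hfL : f L = 0 := by
    have h0 : (i - 1) / 2 ^ L = 0 := Nat.div_eq_of_lt (by omega)
    simp only [hf, h0, hb, mul_zero]
    split <;> simp [ha1]
  have hf0 : f 0 = a i := by
    simp only [hf, pow_zero, Nat.div_one, one_mul, hb]
    rw [if_pos (by omega)]
    congr 1; omega
  have htel : a i = ∑ k ∈ Finset.range L, (f k - f (k + 1)) := by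
    rw [Finset.sum_range_sub' f, hf0, hfL, sub_zero]
  have hkey : ∀ k ∈ Finset.range L, (f k - f (k + 1)) ^ 2 ≤
      ∑ j ∈ Finset.Icc 1 n, (b j k - b (j - 1) k) ^ 2 := by
    intro k _
    set m := (i - 1) / 2 ^ k with hm
    have hm2 : (i - 1) / 2 ^ (k + 1) = m / 2 := by
      rw [hm, Nat.div_div_eq_div_mul, pow_succ]
    rcases Nat.even_or_odd m with he | ho
    · have heq : f k = f (k + 1) := by
        simp only [hf, hm2, ← hm, hb]
        have h2 : 2 ^ (k + 1) * (m / 2) = 2 ^ k * m := by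
          have hmd : 2 * (m / 2) = m := by obtain ⟨t, ht⟩ := he; omega
          calc 2 ^ (k + 1) * (m / 2) = 2 ^ k * (2 * (m / 2)) := by ring
            _ = 2 ^ k * m := by rw [hmd]
        rw [h2]
      rw [heq, sub_self]
      simp only [ne_eq, OfNat.ofNat_ne_zero, not_false_eq_true, zero_pow]
      positivity
    · have hm1 : 1 ≤ m := ho.pos
      have hfk1 : f (k + 1) = b (m - 1) k := by
        simp only [hf, hm2, ← hm, hb]
        have h2 : 2 ^ (k + 1) * (m / 2) = 2 ^ k * (m - 1) := by
          have hmd : 2 * (m / 2) = m - 1 := by obtain ⟨t, ht⟩ := ho; omega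
          calc 2 ^ (k + 1) * (m / 2) = 2 ^ k * (2 * (m / 2)) := by ring
            _ = 2 ^ k * (m - 1) := by rw [hmd]
        rw [h2]
      have hmem : m ∈ Finset.Icc 1 n := by
        refine Finset.mem_Icc.mpr ⟨hm1, ?_⟩
        calc m ≤ i - 1 := Nat.div_le_self _ _
          _ ≤ n := by omega
      calc (f k - f (k + 1)) ^ 2 = (b m k - b (m - 1) k) ^ 2 := by rw [hfk1]
        _ ≤ ∑ j ∈ Finset.Icc 1 n, (b j k - b (j - 1) k) ^ 2 :=
          Finset.single_le_sum (f := fun j => (b j k - b (j - 1) k) ^ 2)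
            (fun j _ => sq_nonneg _) hmem
  calc a i ^ 2 = (∑ k ∈ Finset.range L, (f k - f (k + 1))) ^ 2 := by rw [htel]
    _ ≤ (Finset.range L).card * ∑ k ∈ Finset.range L, (f k - f (k + 1)) ^ 2 :=
        sq_sum_le_card_mul_sum_sq
    _ ≤ (L : ℝ) * ∑ k ∈ Finset.range L, ∑ j ∈ Finset.Icc 1 n,
          (b j k - b (j - 1) k) ^ 2 := by
        rw [Finset.card_range]
        exact mul_le_mul_of_nonneg_left (Finset.sum_le_sum hkey) (Nat.cast_nonneg _)
end

section
/- Let n = 2^L for an integer L ≥ 1, and let A ∈ ℝ^{d×n} be a matrix whose first column is zero (A_{i,1} = 0 for all i ∈ [d]). For j ∈ {0,1,…,n} and k ∈ {0,1,…,L}, define b_{j,k} ∈ ℝ^d to be the column of A with index 1 + 2^k · j if 1 + 2^k · j ≤ n, and the zero vector otherwise. Then: (1) for each i ∈ [d], max_{j∈[n]} A_{i,j}² ≤ L · ∑_{k=0}^{L−1} ∑_{j=1}^{n} (b_{j,k} − b_{j−1,k})_i²; and (2) ∑_{i=1}^{d} max_{j∈[n]} A_{i,j}² ≤ L · ∑_{k=0}^{L−1}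 ∑_{j=1}^{n} ‖b_{j,k} − b_{j−1,k}‖₂². -/
/-!
Write column `1 + x` as the end of a chain of dyadic samples: with `c₀ = x` and
`c_{k+1} = ⌈c_k / 2⌉`, the point `2^k c_k` is the least multiple of `2^k` that is `≥ x`, and
at level `L` the sample is either column `1` or lies beyond `n`, so it vanishes. Consecutive
samples of the chain are equal or are neighbours on the grid `2^k ℕ`, so each link is bounded by
the level-`k` sum of squared increments; Cauchy–Schwarz over the `L` links gives the factor `L`.
-/

open Finset

variable {R : Type*} [CommRing R] [LinearOrder R] [IsStrictOrderedRing R]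

theorem sq_sub_le_mul_sum_sq_sub (f : ℕ → R) (L : ℕ) :
    (f 0 - f L) ^ 2 ≤ L * ∑ k ∈ range L, (f k - f (k + 1)) ^ 2 := by
  have h := sq_sum_le_card_mul_sum_sq (s := range L) (f := fun k => f k - f (k + 1))
  rwa [sum_range_sub', card_range] at h

/-- `dyadicCeil x k = ⌈x / 2^k⌉`. -/
def dyadicCeil (x : ℕ) : ℕ → ℕ
  | 0 => x
  | k + 1 => (dyadicCeil x k + 1) / 2

theorem dyadicCeil_le (x k : ℕ) : dyadicCeil x k ≤ x := by
  induction k with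
  | zero => rfl
  | succ k ih => simp only [dyadicCeil]; omega

theorem two_pow_succ_mul_dyadicCeil_succ (x k : ℕ) :
    2 ^ (k + 1) * dyadicCeil x (k + 1) = 2 ^ k * (dyadicCeil x k + dyadicCeil x k % 2) := by
  rw [dyadicCeil, pow_succ, mul_assoc]
  congr 1
  omega

theorem sq_sub_dyadicCeil_le_sum_sq_sub (g : ℕ → R) {x N : ℕ} (hx : x < N) (k : ℕ) :
    (g (2 ^ k * dyadicCeil x k) - g (2 ^ (k + 1) * dyadicCeil x (k + 1))) ^ 2 ≤
      ∑ j ∈ Icc 1 N, (g (2 ^ k * j) - g (2 ^ k * (j - 1))) ^ 2 := by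
  rw [two_pow_succ_mul_dyadicCeil_succ]
  set c := dyadicCeil x k
  have hc : c < N := (dyadicCeil_le x k).trans_lt hx
  rcases Nat.mod_two_eq_zero_or_one c with h | h
  · rw [h, add_zero, sub_self, sq, zero_mul]
    exact sum_nonneg fun _ _ => sq_nonneg _
  · have hmem : c + 1 ∈ Icc 1 N := mem_Icc.2 ⟨by omega, hc⟩
    rw [h, ← neg_sub, neg_sq]
    simpa using
      single_le_sum (fun j _ => sq_nonneg (g (2 ^ k * j) - g (2 ^ k * (j - 1)))) hmem

theorem sq_le_mul_sum_sq_dyadic_sub (w : ℕ → R) {L N x : ℕ} (hw0 : w 0 = 0)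
    (hw : ∀ y, 2 ^ L ≤ y → w y = 0) (hx : x < N) :
    w x ^ 2 ≤
      L * ∑ k ∈ range L, ∑ j ∈ Icc 1 N, (w (2 ^ k * j) - w (2 ^ k * (j - 1))) ^ 2 := by
  set f : ℕ → R := fun k => w (2 ^ k * dyadicCeil x k)
  have hf0 : f 0 = w x := by simp [f, dyadicCeil]
  have hfL : f L = 0 := by
    rcases Nat.eq_zero_or_pos (dyadicCeil x L) with h | h
    · simp [f, h, hw0]
    · exact hw _ (Nat.le_mul_of_pos_right _ h)
  calc w x ^ 2 = (f 0 - f L) ^ 2 := by rw [hf0, hfL, sub_zero]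
    _ ≤ L * ∑ k ∈ range L, (f k - f (k + 1)) ^ 2 := sq_sub_le_mul_sum_sq_sub f L
    _ ≤ _ := by
      gcongr with k
      exact sq_sub_dyadicCeil_le_sum_sq_sub w hx k

theorem stmt_12_general {d n L : ℕ} (hn : n = 2 ^ L)
    (A : ℕ → ℕ → ℝ) (hA1 : ∀ i ∈ Finset.Icc 1 d, A i 1 = 0)
    (b : ℕ → ℕ → ℕ → ℝ)
    (hb : ∀ (j k i : ℕ), b j k i = if 1 + 2 ^ k * j ≤ n then A i (1 + 2 ^ k * j) else 0)
    (hne : (Finset.Icc 1 n).Nonempty) :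
    (∀ i ∈ Finset.Icc 1 d,
      ((Finset.Icc 1 n).sup' hne fun j => A i j ^ 2) ≤
        (L : ℝ) * ∑ k ∈ Finset.range L, ∑ j ∈ Finset.Icc 1 n,
          (b j k i - b (j - 1) k i) ^ 2) ∧
    (∑ i ∈ Finset.Icc 1 d, (Finset.Icc 1 n).sup' hne (fun j => A i j ^ 2)) ≤
      (L : ℝ) * ∑ k ∈ Finset.range L, ∑ j ∈ Finset.Icc 1 n,
        ∑ i ∈ Finset.Icc 1 d, (b j k i - b (j - 1) k i) ^ 2 := by
  have row : ∀ i ∈ Icc 1 d, ((Icc 1 n).sup' hne fun j => A i j ^ 2) ≤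
      (L : ℝ) * ∑ k ∈ range L, ∑ j ∈ Icc 1 n, (b j k i - b (j - 1) k i) ^ 2 := by
    intro i hi
    refine sup'_le hne _ fun m hm => ?_
    obtain ⟨hm1, hmn⟩ := mem_Icc.1 hm
    let w : ℕ → ℝ := fun y => if 1 + y ≤ n then A i (1 + y) else 0
    have hw0 : w 0 = 0 := by simp [w, hA1 i hi]
    have hw : ∀ y, 2 ^ L ≤ y → w y = 0 := fun y hy => if_neg (by omega)
    have hwm : w (m - 1) = A i m := by
      simp only [w, if_pos (show 1 + (m - 1) ≤ n by omega), show 1 + (m - 1) = m by omega]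
    simpa only [hb, hwm] using sq_le_mul_sum_sq_dyadic_sub w hw0 hw (show m - 1 < n by omega)
  refine ⟨row, (sum_le_sum row).trans_eq ?_⟩
  rw [← mul_sum, sum_comm]
  simp_rw [sum_comm (s := Icc 1 d) (t := Icc 1 n)]

theorem stmt_12 {d n L : ℕ} (hd : 1 ≤ d) (hL : 1 ≤ L) (hn : n = 2 ^ L)
    (A : ℕ → ℕ → ℝ) (hA1 : ∀ i ∈ Finset.Icc 1 d, A i 1 = 0)
    (b : ℕ → ℕ → ℕ → ℝ)
    (hb : ∀ (j k i : ℕ), b j k i = if 1 + 2 ^ k * j ≤ n then A i (1 + 2 ^ k * j) else 0)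
    (hne : (Finset.Icc 1 n).Nonempty) :
    (∀ i ∈ Finset.Icc 1 d,
      ((Finset.Icc 1 n).sup' hne fun j => A i j ^ 2) ≤
        (L : ℝ) * ∑ k ∈ Finset.range L, ∑ j ∈ Finset.Icc 1 n,
          (b j k i - b (j - 1) k i) ^ 2) ∧
    (∑ i ∈ Finset.Icc 1 d, (Finset.Icc 1 n).sup' hne (fun j => A i j ^ 2)) ≤
      (L : ℝ) * ∑ k ∈ Finset.range L, ∑ j ∈ Finset.Icc 1 n,
        ∑ i ∈ Finset.Icc 1 d, (b j k i - b (j - 1) k i) ^ 2 :=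
  stmt_12_general hn A hA1 b hb hne
end

section
/- Under Oja's update rule with η ≤ 0.1 / max_{i∈[n]} ‖y_i‖₂² and v_0 ≠ 0, one has ‖v_n‖₂ ≥ √η · (∑_{i=1}^{n} ⟨y_i, v_{i−1}⟩²)^{1/2}. -/
open RealInnerProductSpace

theorem stmt_15 {n d : ℕ} (hn : 1 ≤ n) (hd : 1 ≤ d)
    (y : ℕ → EuclideanSpace ℝ (Fin d)) (η : ℝ) (hη : 0 < η)
    (hη' : η ≤ 0.1 / ((Finset.Icc 1 n).sup' (Finset.nonempty_Icc.mpr hn)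
      fun i => ‖y i‖ ^ 2))
    (v : ℕ → EuclideanSpace ℝ (Fin d)) (hv0 : v 0 ≠ 0)
    (hv : ∀ i, 1 ≤ i → i ≤ n → v i = v (i - 1) + (η * ⟪y i, v (i - 1)⟫) • y i) :
    Real.sqrt η * Real.sqrt (∑ i ∈ Finset.Icc 1 n, ⟪y i, v (i - 1)⟫ ^ 2) ≤
      ‖v n‖ := by
  have key : ∀ m, m ≤ n →
      η * ∑ i ∈ Finset.Icc 1 m, ⟪y i, v (i - 1)⟫ ^ 2 ≤ ‖v m‖ ^ 2 := by
    intro m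
    induction m with
    | zero => intro _; simp [sq_nonneg]
    | succ k ih =>
      intro hk
      have ih' := ih (le_of_lt (Nat.lt_of_succ_le hk))
      have hv' := hv (k + 1) (Nat.le_add_left 1 k) hk
      simp only [Nat.add_sub_cancel] at hv'
      set c := ⟪y (k + 1), v k⟫ with hc
      have expand : ‖v (k + 1)‖ ^ 2
          = ‖v k‖ ^ 2 + 2 * (η * c) * c + (η * c) ^ 2 * ‖y (k + 1)‖ ^ 2 := by
        rw [hv', @norm_add_sq_real, real_inner_smul_right, norm_smul]
        rw [real_inner_comm, ← hc]
        ring_nf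
        simp [mul_pow, sq_abs]
      rw [Finset.sum_Icc_succ_top (Nat.le_add_left 1 k)]
      simp only [Nat.add_sub_cancel, ← hc]
      rw [mul_add]
      rw [expand]
      have h1 : η * c ^ 2 ≤ 2 * (η * c) * c + (η * c) ^ 2 * ‖y (k + 1)‖ ^ 2 := by
        nlinarith [sq_nonneg c, sq_nonneg ((η * c) * ‖y (k + 1)‖), mul_nonneg hη.le (sq_nonneg c)]
      linarith
  have h := key n le_rfl
  have hS : 0 ≤ ∑ i ∈ Finset.Icc 1 n, ⟪y i, v (i - 1)⟫ ^ 2 :=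
    Finset.sum_nonneg fun i _ => sq_nonneg _
  rw [← Real.sqrt_mul hη.le]
  calc Real.sqrt (η * ∑ i ∈ Finset.Icc 1 n, ⟪y i, v (i - 1)⟫ ^ 2)
      ≤ Real.sqrt (‖v n‖ ^ 2) := Real.sqrt_le_sqrt h
    _ = ‖v n‖ := Real.sqrt_sq (norm_nonneg _)
end
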